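/- arXiv:2008.00255 — 2 statements merged into one kernel-verified Lean document; each statement's English description precedes it below -/
import Mathlib

section
/- Let z ∈ Σ* and θ an antimorphic involution. If |C_θ(z)| ≠ 1, then |C_θ(z)| < |C_θ(z²)|. -/
variable {α : Type*}

/-- θ is an antimorphic involution on Σ* : θ(uv) = θ(v)θ(u) and θ² = id. -/
def IsAntimorphicInvolution (θ : List α → List α) : Prop :=
  (∀ u v : List α, θ (u ++ v) = θ v ++ θ u) ∧ ∀ u : List α, θ (θ u) = u

/-- The set of θ-conjugates of w: C_θ(w) = { θ(v) ++ u : w = u ++ v }. -/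
def thetaConjugates (θ : List α → List α) (w : List α) : Set (List α) :=
  {x | ∃ u v : List α, w = u ++ v ∧ x = θ v ++ u}

/-- n-fold concatenation power of a word. -/
def listPow (z : List α) (n : ℕ) : List α := (List.replicate n z).flatten

/-- A word is primitive if it is not a proper power. -/
def Primitive (z : List α) : Prop :=
  z ≠ [] ∧ ∀ (t : List α) (k : ℕ), z = listPow t k → k = 1

/-- The conjugacy class of w: { v ++ u : w = u ++ v }. -/
def conjClass (w : List α) : Set (List α) := {x | ∃ u v : List α, w = u ++ v ∧ x = v ++ u}

lemma theta_nil {θ : List α → List α} (hθ : IsAntimorphicInvolution θ) : θ [] = [] := by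
  have h1 : θ [] = θ [] ++ θ [] := by simpa using hθ.1 [] []
  have h2 := congrArg List.length h1
  simp only [List.length_append] at h2
  exact List.length_eq_zero_iff.mp (by omega)

lemma theta_len_ge {θ : List α → List α} (hθ : IsAntimorphicInvolution θ) (u : List α) :
    u.length ≤ (θ u).length := by
  induction u with
  | nil => simp [theta_nil hθ]
  | cons a t ih =>
    have h1 : θ (a :: t) = θ t ++ θ [a] := by
      have := hθ.1 [a] t; simpa using this
    have hne : θ [a] ≠ [] := by
      intro hn
      have := hθ.2 [a]
      rw [hn, theta_nil hθ] at this
      simp at this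
    have : 1 ≤ (θ [a]).length := List.length_pos_iff.mpr hne
    simp [h1]
    omega

lemma theta_len {θ : List α → List α} (hθ : IsAntimorphicInvolution θ) (u : List α) :
    (θ u).length = u.length := by
  have h1 := theta_len_ge hθ u
  have h2 := theta_len_ge hθ (θ u)
  rw [hθ.2 u] at h2
  omega

lemma tc_finite (θ : List α → List α) (w : List α) : (thetaConjugates θ w).Finite := by
  apply Set.Finite.subset ((Set.finite_Iic w.length).image (fun n => θ (w.drop n) ++ w.take n))
  rintro x ⟨u, v, rfl, rfl⟩
  exact ⟨u.length, by simp, by simp⟩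

lemma self_mem_tc (θ : List α → List α) (hθ : IsAntimorphicInvolution θ) (w : List α) :
    w ∈ thetaConjugates θ w :=
  ⟨w, [], by simp, by simp [theta_nil hθ]⟩

theorem stmt4 (θ : List α → List α) (hθ : IsAntimorphicInvolution θ) (z : List α)
    (h : (thetaConjugates θ z).ncard ≠ 1) :
    (thetaConjugates θ z).ncard < (thetaConjugates θ (z ++ z)).ncard := by
  set S := thetaConjugates θ z with hS
  set T := thetaConjugates θ (z ++ z) with hT
  have hSfin : S.Finite := tc_finite θ z
  have hTfin : T.Finite := tc_finite θ (z ++ z)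
  have hzS : z ∈ S := self_mem_tc θ hθ z
  -- image of injection
  have himg : (fun x => θ z ++ x) '' S ⊆ T := by
    rintro _ ⟨x, ⟨u, v, huv, rfl⟩, rfl⟩
    refine ⟨u, v ++ z, by rw [huv]; simp, ?_⟩
    rw [hθ.1 v z]
    simp
  have hcard : S.ncard = ((fun x => θ z ++ x) '' S).ncard :=
    (Set.ncard_image_of_injective S (fun a b hab => List.append_cancel_left hab)).symm
  rw [hcard]
  apply Set.ncard_lt_ncard _ hTfin
  rw [Set.ssubset_iff_of_subset himg]
  -- find a witness in T outside the image
  by_cases hzz : θ z = z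
  · -- there is some conjugate ≠ z
    have hex : ∃ x ∈ S, x ≠ z := by
      by_contra hc
      push_neg at hc
      have : S = {z} := Set.eq_singleton_iff_unique_mem.mpr ⟨hzS, hc⟩
      rw [this] at h
      simp at h
    obtain ⟨x, hxS, hxne⟩ := hex
    obtain ⟨u, v, huv, rfl⟩ := hxS
    refine ⟨θ v ++ (z ++ u), ⟨z ++ u, v, by rw [List.append_assoc, ← huv], rfl⟩, ?_⟩
    rintro ⟨y, -, hy⟩
    apply hxne
    have hlen : (θ v ++ u).length = z.length := by
      rw [huv]; simp [theta_len hθ]; omega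
    have hy' : θ z ++ y = θ v ++ (z ++ u) := hy
    have hrw : (θ v ++ u) ++ (v ++ u) = z ++ y := by
      rw [← hzz, hy', huv]; simp
    exact (List.append_inj hrw hlen).1
  · refine ⟨z ++ z, ⟨z ++ z, [], by simp, by simp [theta_nil hθ]⟩, ?_⟩
    rintro ⟨y, -, hy⟩
    exact hzz (List.append_inj hy.symm (by simp [theta_len hθ])).1.symm
end

section
/- Let θ be an antimorphic involution. If the conjugacy class of a word contains two distinct θ-palindromes uv and vu, then there exists a word x and an integer i ≥ 1 such that xθ(x) is primitive, uv = (xθ(x))^i, and vu = (θ(x)x)^i. -/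
variable {α : Type*}

lemma listPow_zero (z : List α) : listPow z 0 = [] := rfl
lemma listPow_succ (z : List α) (n : ℕ) : listPow z (n+1) = z ++ listPow z n := rfl
lemma listPow_one (z : List α) : listPow z 1 = z := by simp [listPow]
lemma listPow_add (z : List α) (m n : ℕ) :
    listPow z (m+n) = listPow z m ++ listPow z n := by
  induction m with
  | zero => simp [listPow_zero]
  | succ k ih => rw [Nat.succ_add, listPow_succ, ih, listPow_succ, List.append_assoc]
lemma listPow_succ' (z : List α) (n : ℕ) : listPow z (n+1) = listPow z n ++ z := by
  rw [listPow_add, listPow_one]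
lemma listPow_length (z : List α) (n : ℕ) :
    (listPow z n).length = n * z.length := by
  simp [listPow]
lemma listPow_mul (z : List α) (m n : ℕ) :
    listPow z (m*n) = listPow (listPow z n) m := by
  induction m with
  | zero => simp [listPow_zero]
  | succ k ih => rw [Nat.succ_mul, listPow_add, ih, listPow_succ']
lemma listPow_eq_nil (z : List α) (n : ℕ) (h : z = []) : listPow z n = [] := by
  subst h; simp [listPow]
lemma listPow_ne_nil (z : List α) (n : ℕ) (hz : z ≠ []) (hn : 1 ≤ n) :
    listPow z n ≠ [] := by
  intro h
  have := listPow_length z n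
  rw [h] at this
  simp at this
  rcases this with h1 | h2
  · omega
  · exact hz h2

section Theta
variable (θ : List α → List α) (hθ : IsAntimorphicInvolution θ)
include hθ

lemma theta_nil_s10 : θ [] = [] := by
  have h : θ ([] ++ []) = θ [] ++ θ [] := hθ.1 [] []
  simp only [List.append_nil] at h
  have h2 := congrArg List.length h
  simp at h2
  exact h2

lemma theta_ne_nil (w : List α) (hw : w ≠ []) : θ w ≠ [] := by
  intro h
  have := hθ.2 w
  rw [h, theta_nil_s10 θ hθ] at this
  exact hw this.symm

lemma theta_singleton_length (a : α) : (θ [a]).length = 1 := by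
  rcases hL : θ [a] with _ | ⟨b, L'⟩
  · exact absurd hL (theta_ne_nil θ hθ [a] (by simp))
  · rcases hL' : L' with _ | ⟨c, L''⟩
    · rfl
    · exfalso
      have h1 : θ (θ [a]) = [a] := hθ.2 [a]
      rw [hL, hL'] at h1
      have h2 : θ (b :: c :: L'') = θ (c :: L'') ++ θ [b] := by
        have := hθ.1 [b] (c :: L'')
        simpa using this
      rw [h2] at h1
      have hb : θ [b] ≠ [] := theta_ne_nil θ hθ [b] (by simp)
      have hc : θ (c :: L'') ≠ [] := theta_ne_nil θ hθ (c :: L'') (by simp)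
      have hlen := congrArg List.length h1
      rw [List.length_append] at hlen
      simp only [List.length_singleton] at hlen
      have hb' : 1 ≤ (θ [b]).length := List.length_pos_iff.mpr hb
      have hc' : 1 ≤ (θ (c :: L'')).length := List.length_pos_iff.mpr hc
      omega

lemma theta_length (w : List α) : (θ w).length = w.length := by
  induction w with
  | nil => rw [theta_nil_s10 θ hθ]
  | cons a w ih =>
    have h : θ (a :: w) = θ w ++ θ [a] := by
      have := hθ.1 [a] w
      simpa using this
    rw [h]
    simp [ih, theta_singleton_length θ hθ a]
end Theta


lemma theta_pow (θ : List α → List α) (hθ : IsAntimorphicInvolution θ)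
    (z : List α) (n : ℕ) : θ (listPow z n) = listPow (θ z) n := by
  induction n with
  | zero => simpa [listPow_zero] using theta_nil_s10 θ hθ
  | succ k ih => rw [listPow_succ, hθ.1, ih, listPow_succ']

lemma splitPow (t p q : List α) (n : ℕ) (h : p ++ q = listPow t n) :
    (∃ a b, n = a + b ∧ p = listPow t a ∧ q = listPow t b) ∨
    (∃ a b t1 t2, n = a + b + 1 ∧ t = t1 ++ t2 ∧ t1 ≠ [] ∧ t2 ≠ [] ∧
      p = listPow t a ++ t1 ∧ q = t2 ++ listPow t b) := by
  induction n generalizing p q with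
  | zero =>
    rw [listPow_zero, List.append_eq_nil_iff] at h
    exact Or.inl ⟨0, 0, rfl, h.1, h.2⟩
  | succ n ih =>
    rw [listPow_succ, List.append_eq_append_iff] at h
    rcases h with ⟨a', ht, hq⟩ | ⟨c', hp, hL⟩
    · rcases eq_or_ne a' [] with rfl | ha'
      · simp only [List.append_nil] at ht
        exact Or.inl ⟨1, n, by omega, by rw [listPow_one, ht], by rw [hq]; simp⟩
      · rcases eq_or_ne p [] with rfl | hp
        · refine Or.inl ⟨0, n+1, by omega, rfl, ?_⟩
          rw [hq, listPow_succ, ht]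
          simp
        · exact Or.inr ⟨0, n, p, a', by omega, ht, hp, ha', by simp [listPow_zero], hq⟩
    · rcases ih c' q hL.symm with ⟨a, b, rfl, hc, hq⟩ | ⟨a, b, t1, t2, rfl, ht, h1, h2, hc, hq⟩
      · exact Or.inl ⟨a+1, b, by ring, by rw [hp, hc, listPow_succ], hq⟩
      · refine Or.inr ⟨a+1, b, t1, t2, by ring, ht, h1, h2, ?_, hq⟩
        rw [hp, hc, listPow_succ, List.append_assoc]

lemma comm_pow_aux : ∀ N (s w : List α), s.length + w.length ≤ N → s ++ w = w ++ s →
    ∃ (t : List α) (a b : ℕ), s = listPow t a ∧ w = listPow t b := by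
  intro N
  induction N with
  | zero =>
    intro s w hlen _
    have hs : s = [] := by
      have : s.length = 0 := by omega
      exact List.length_eq_zero_iff.mp this
    have hw : w = [] := by
      have : w.length = 0 := by omega
      exact List.length_eq_zero_iff.mp this
    exact ⟨[], 0, 0, by simp [hs, listPow_zero], by simp [hw, listPow_zero]⟩
  | succ N ih =>
    intro s w hlen h
    rcases le_or_gt s.length w.length with hle | hlt
    · rcases eq_or_ne s [] with rfl | hs
      · exact ⟨w, 0, 1, by simp [listPow_zero], by simp [listPow_one]⟩
      · have hsp : s = w.take s.length := by
          have h3 := congrArg (List.take s.length) h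
          rw [List.take_left, List.take_append_of_le_length hle] at h3
          exact h3
        set w' := w.drop s.length with hw'
        have hw : w = s ++ w' := by
          conv_lhs => rw [← List.take_append_drop s.length w, ← hsp]
        have h2 : s ++ w' = w' ++ s := by
          have : s ++ (s ++ w') = (s ++ w') ++ s := by rw [← hw, h]
          rw [List.append_assoc] at this
          exact List.append_cancel_left this
        have hslen : 1 ≤ s.length := List.length_pos_iff.mpr hs
        have hw'len : w'.length = w.length - s.length := by simp [hw']
        have : s.length + w'.length ≤ N := by omega
        obtain ⟨t, a, b, hst, hwt⟩ := ih s w' this h2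
        exact ⟨t, a, a + b, hst, by rw [hw, hst, hwt, ← listPow_add]⟩
    · rcases eq_or_ne w [] with rfl | hw
      · exact ⟨s, 1, 0, by simp [listPow_one], by simp [listPow_zero]⟩
      · have hsp : w = s.take w.length := by
          have h3 := congrArg (List.take w.length) h
          rw [List.take_left, List.take_append_of_le_length (le_of_lt hlt)] at h3
          exact h3.symm
        set s' := s.drop w.length with hs'
        have hs : s = w ++ s' := by
          conv_lhs => rw [← List.take_append_drop w.length s, ← hsp]
        have h2 : w ++ s' = s' ++ w := by
          have : w ++ (w ++ s') = (w ++ s') ++ w := by rw [← hs, ← h]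
          rw [List.append_assoc] at this
          exact List.append_cancel_left this
        have hwlen : 1 ≤ w.length := List.length_pos_iff.mpr hw
        have hs'len : s'.length = s.length - w.length := by simp [hs']
        have : w.length + s'.length ≤ N := by omega
        obtain ⟨t, a, b, hwt, hst⟩ := ih w s' this h2
        exact ⟨t, a + b, a, by rw [hs, hwt, hst, ← listPow_add], hwt⟩

lemma comm_pow (s w : List α) (h : s ++ w = w ++ s) :
    ∃ (t : List α) (a b : ℕ), s = listPow t a ∧ w = listPow t b :=
  comm_pow_aux (s.length + w.length) s w le_rfl h

lemma prim_root_aux : ∀ N (w : List α), w.length ≤ N → w ≠ [] →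
    ∃ (z : List α) (k : ℕ), Primitive z ∧ 1 ≤ k ∧ w = listPow z k := by
  intro N
  induction N with
  | zero =>
    intro w hlen hw
    exact absurd (List.length_eq_zero_iff.mp (by omega)) hw
  | succ N ih =>
    intro w hlen hw
    by_cases hp : Primitive w
    · exact ⟨w, 1, hp, le_rfl, (listPow_one w).symm⟩
    · rw [Primitive, not_and_or] at hp
      rcases hp with hp | hp
      · exact absurd hw (by simpa using hp)
      · push_neg at hp
        obtain ⟨t, k, hwt, hk⟩ := hp
        have ht : t ≠ [] := by
          rintro rfl
          exact hw (by rw [hwt, listPow_eq_nil _ _ rfl])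
        have hk2 : 2 ≤ k := by
          rcases k with _ | _ | k
          · exact absurd (by rw [hwt, listPow_zero]) hw
          · exact absurd rfl hk
          · omega
        have htlen : 1 ≤ t.length := List.length_pos_iff.mpr ht
        have hwlen : w.length = k * t.length := by rw [hwt, listPow_length]
        have : t.length ≤ N := by nlinarith
        obtain ⟨z, m, hz, hm, htm⟩ := ih t this ht
        exact ⟨z, k * m, hz, Nat.mul_pos (by omega) hm, by rw [hwt, htm, ← listPow_mul]⟩

lemma rot_pow (t1 t2 : List α) (m : ℕ) :
    t2 ++ (listPow (t1 ++ t2) m ++ t1) = listPow (t2 ++ t1) (m+1) := by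
  induction m with
  | zero => simp [listPow_one, listPow_zero]
  | succ k ih =>
    rw [listPow_succ, listPow_succ]
    calc t2 ++ ((t1 ++ t2) ++ listPow (t1 ++ t2) k ++ t1)
        = (t2 ++ t1) ++ (t2 ++ (listPow (t1 ++ t2) k ++ t1)) := by
          simp [List.append_assoc]
      _ = (t2 ++ t1) ++ listPow (t2 ++ t1) (k+1) := by rw [ih]

lemma prim_rot (p q : List α) (h : Primitive (p ++ q)) : Primitive (q ++ p) := by
  constructor
  · intro hqp
    have := congrArg List.length hqp
    have h2 := h.1
    rw [List.length_append] at this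
    simp at this
    exact h2 (by rw [this.1, this.2]; rfl)
  · intro t k hqt
    rcases splitPow t q p k hqt with ⟨a, b, rfl, hq, hp⟩ | ⟨a, b, t1, t2, rfl, ht, h1, h2, hq, hp⟩
    · have := h.2 t (b + a) (by rw [hq, hp, ← listPow_add]); omega
    · refine h.2 (t2 ++ t1) (a + b + 1) ?_
      rw [hp, hq, ht]
      have e1 : t2 ++ listPow (t1 ++ t2) b ++ (listPow (t1 ++ t2) a ++ t1)
          = t2 ++ (listPow (t1 ++ t2) (a + b) ++ t1) := by
        rw [Nat.add_comm a b, listPow_add]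
        simp [List.append_assoc]
      rw [e1, rot_pow]

lemma root_pal (θ : List α → List α) (hθ : IsAntimorphicInvolution θ)
    (z : List α) (k : ℕ) (hk : 1 ≤ k)
    (h : θ (listPow z k) = listPow z k) : θ z = z := by
  rw [theta_pow θ hθ] at h
  obtain ⟨k, rfl⟩ : ∃ m, k = m + 1 := ⟨k - 1, by omega⟩
  rw [listPow_succ, listPow_succ] at h
  exact (List.append_inj h (by rw [theta_length θ hθ])).1

lemma core (θ : List α → List α) (hθ : IsAntimorphicInvolution θ)
    (z u : List α) (i : ℕ) (hz : z ≠ []) (hzpal : θ z = z)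
    (h : u ++ θ u = listPow z i) :
    (∃ j, i = 2*j ∧ u = listPow z j) ∨
    (∃ x j, i = 2*j+1 ∧ z = x ++ θ x ∧ u = listPow z j ++ x) := by
  rcases splitPow z u (θ u) i h with ⟨a, b, rfl, hu, hθu⟩ |
    ⟨a, b, t1, t2, rfl, ht, h1, h2, hu, hθu⟩
  · have hth : θ u = listPow z a := by rw [hu, theta_pow θ hθ, hzpal]
    have hzl : 1 ≤ z.length := List.length_pos_iff.mpr hz
    have hab : a = b := by
      have he := congrArg List.length (hth.symm.trans hθu)
      rw [listPow_length, listPow_length] at he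
      exact Nat.eq_of_mul_eq_mul_right (by omega) he
    left; exact ⟨a, by omega, hu⟩
  · have hθu' : θ u = θ t1 ++ listPow z a := by
      rw [hu, hθ.1, theta_pow θ hθ, hzpal]
    have heq : θ t1 ++ listPow z a = t2 ++ listPow z b := by rw [← hθu', hθu]
    have hL : t1.length + t2.length = z.length := by
      rw [ht, List.length_append]
    have h1' : 1 ≤ t1.length := List.length_pos_iff.mpr h1
    have h2' : 1 ≤ t2.length := List.length_pos_iff.mpr h2
    have e : t1.length + a * z.length = t2.length + b * z.length := by
      have := congrArg List.length heq
      simpa [listPow_length, theta_length θ hθ] using this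
    have hab : a = b := by
      rcases Nat.lt_trichotomy a b with hab | hab | hab
      · exfalso
        have h3 : a * z.length + z.length ≤ b * z.length := by
          calc a * z.length + z.length = (a+1) * z.length := by ring
            _ ≤ b * z.length := Nat.mul_le_mul_right _ hab
        set A := a * z.length
        set B := b * z.length
        omega
      · exact hab
      · exfalso
        have h3 : b * z.length + z.length ≤ a * z.length := by
          calc b * z.length + z.length = (b+1) * z.length := by ring
            _ ≤ a * z.length := Nat.mul_le_mul_right _ hab
        set A := a * z.length
        set B := b * z.length
        omega
    subst hab
    have ht12 : θ t1 = t2 := by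
      have hlen : (θ t1).length = t2.length := by
        rw [theta_length θ hθ]; omega
      exact (List.append_inj heq hlen).1
    right
    exact ⟨t1, a, by omega, by rw [ht, ht12], hu⟩

lemma main_aux (θ : List α → List α) (hθ : IsAntimorphicInvolution θ)
    (u v : List α) (hle : u.length ≤ v.length)
    (h1 : θ (u ++ v) = u ++ v) (h2 : θ (v ++ u) = v ++ u)
    (hne : u ++ v ≠ v ++ u) :
    ∃ (x : List α) (i : ℕ), 1 ≤ i ∧ Primitive (x ++ θ x) ∧
      u ++ v = listPow (x ++ θ x) i ∧ v ++ u = listPow (θ x ++ x) i := by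
  have hu : u ≠ [] := by rintro rfl; simp at hne
  have hv : v ≠ [] := by rintro rfl; simp at hne
  have h1' : θ v ++ θ u = u ++ v := by rw [← hθ.1]; exact h1
  rcases eq_or_lt_of_le hle with heq | hlt
  · -- |u| = |v| : θ v = u, θ u = v
    have hlen : (θ v).length = u.length := by rw [theta_length θ hθ]; omega
    obtain ⟨hvu, huv⟩ := List.append_inj h1' hlen
    -- u ++ v = u ++ θ u
    have hveq : v = θ u := huv.symm
    have hne' : u ++ θ u ≠ [] := by
      intro hc
      exact hu (List.append_eq_nil_iff.mp hc).1
    obtain ⟨z, k, hzprim, hk, hzk⟩ :=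
      prim_root_aux (u ++ θ u).length (u ++ θ u) le_rfl hne'
    have hpal : θ (listPow z k) = listPow z k := by
      rw [← hzk, hθ.1, hθ.2]
    have hzpal : θ z = z := root_pal θ hθ z k hk hpal
    rcases core θ hθ z u k hzprim.1 hzpal hzk with ⟨j, rfl, huz⟩ | ⟨x, j, rfl, hzx, huz⟩
    · exfalso
      apply hne
      have : θ u = u := by rw [huz, theta_pow θ hθ, hzpal]
      rw [hveq, this]
    · refine ⟨x, 2*j+1, by omega, by rw [← hzx]; exact hzprim, ?_, ?_⟩
      · rw [hveq, hzk, hzx]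
      · have hθux : θ u = θ x ++ listPow z j := by
          rw [huz, hθ.1, theta_pow θ hθ, hzpal]
        rw [hveq, hθux, huz]
        calc (θ x ++ listPow z j) ++ (listPow z j ++ x)
            = θ x ++ (listPow z (j+j) ++ x) := by
              rw [listPow_add]; simp [List.append_assoc]
          _ = θ x ++ (listPow (x ++ θ x) (j+j) ++ x) := by rw [← hzx]
          _ = listPow (θ x ++ x) (j+j+1) := rot_pow x (θ x) (j+j)
          _ = listPow (θ x ++ x) (2*j+1) := by ring_nf
  · -- |u| < |v|
    have hvlen : (θ v).length = v.length := theta_length θ hθ v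
    set s := (θ v).drop u.length with hs
    have hθv : θ v = u ++ s := by
      have h3 := congrArg (List.take u.length) h1'
      rw [List.take_append_of_le_length (by omega), List.take_left] at h3
      conv_lhs => rw [← List.take_append_drop u.length (θ v), h3]
    have hveq : v = s ++ θ u := by
      have : (u ++ s) ++ θ u = u ++ v := by rw [← hθv, h1']
      rw [List.append_assoc] at this
      exact (List.append_cancel_left this).symm
    have hsne : s ≠ [] := by
      intro hc
      rw [hc, List.append_nil] at hθv
      have := theta_length θ hθ v
      rw [hθv] at this
      omega
    -- commutation
    have hcomm : s ++ (θ u ++ u) = (θ u ++ u) ++ s := by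
      have h2' : θ u ++ θ v = v ++ u := by rw [← hθ.1]; exact h2
      rw [hθv, hveq] at h2'
      simp only [List.append_assoc] at h2' ⊢
      exact h2'.symm
    obtain ⟨t, A, B, hst, hut⟩ := comm_pow s (θ u ++ u) hcomm
    have htne : t ≠ [] := by
      rintro rfl
      exact hsne (by rw [hst, listPow_eq_nil _ _ rfl])
    have hA : 1 ≤ A := by
      rcases Nat.eq_zero_or_pos A with rfl | h; · exact absurd hst hsne
      · exact h
    have hB : 1 ≤ B := by
      rcases Nat.eq_zero_or_pos B with rfl | h
      · exfalso
        have : θ u ++ u = [] := hut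
        exact hu (List.append_eq_nil_iff.mp this).2
      · exact h
    obtain ⟨r, m, hrprim, hm, htr⟩ := prim_root_aux t.length t le_rfl htne
    have hsr : s = listPow r (A * m) := by rw [hst, htr, ← listPow_mul]
    have hur : θ u ++ u = listPow r (B * m) := by rw [hut, htr, ← listPow_mul]
    have hb' : 1 ≤ B * m := Nat.mul_pos hB hm
    have ha' : 1 ≤ A * m := Nat.mul_pos hA hm
    have hrpal : θ r = r := by
      refine root_pal θ hθ r (B * m) hb' ?_
      rw [← hur, hθ.1, hθ.2]
    have hcore : θ u ++ θ (θ u) = listPow r (B * m) := by rw [hθ.2]; exact hur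
    rcases core θ hθ r (θ u) (B * m) hrprim.1 hrpal hcore with
      ⟨j, hbm, hθuz⟩ | ⟨x, j, hbm, hrx, hθuz⟩
    · exfalso
      apply hne
      have huu : u = listPow r j := by
        have := congrArg θ hθuz
        rw [hθ.2, theta_pow θ hθ, hrpal] at this
        exact this
      rw [hveq, hθuz, huu, hsr]
      simp only [← List.append_assoc, ← listPow_add]
      rw [Nat.add_comm (A*m) j, Nat.add_assoc, Nat.add_comm (A*m) j, ← Nat.add_assoc]
    · have huu : u = θ x ++ listPow r j := by
        have := congrArg θ hθuz
        rw [hθ.2, hθ.1, theta_pow θ hθ, hrpal] at this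
        exact this
      refine ⟨θ x, A * m + B * m, by omega, ?_, ?_, ?_⟩
      · have : θ (θ x) = x := hθ.2 x
        rw [this]
        exact prim_rot x (θ x) (hrx ▸ hrprim)
      · -- u ++ v = (θx ++ θθx)^(a'+b') = (θx ++ x)^..
        rw [hθ.2, hveq, hθuz, huu, hsr]
        calc (θ x ++ listPow r j) ++ (listPow r (A*m) ++ (listPow r j ++ x))
            = θ x ++ (listPow r (j + (A*m) + j) ++ x) := by
              simp only [listPow_add, List.append_assoc]
          _ = θ x ++ (listPow (x ++ θ x) (j + (A*m) + j) ++ x) := by rw [← hrx]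
          _ = listPow (θ x ++ x) (j + (A*m) + j + 1) := rot_pow x (θ x) _
          _ = listPow (θ x ++ x) (A*m + B*m) := by rw [hbm]; ring_nf
      · -- v ++ u = r^(a'+b') = (θθx ++ θx)^.. = (x ++ θx)^..
        rw [hθ.2, hveq, hθuz, huu, hsr, ← hrx]
        calc (listPow r (A*m) ++ (listPow r j ++ x)) ++ (θ x ++ listPow r j)
            = listPow r (A*m) ++ listPow r j ++ (x ++ θ x) ++ listPow r j := by
              simp [List.append_assoc]
          _ = listPow r (A*m) ++ listPow r j ++ listPow r 1 ++ listPow r j := by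
              rw [← hrx, listPow_one]
          _ = listPow r (A*m + j + 1 + j) := by
              simp only [listPow_add, List.append_assoc]
          _ = listPow r (A*m + B*m) := by rw [hbm]; ring_nf

theorem stmt10 (θ : List α → List α) (hθ : IsAntimorphicInvolution θ)
    (u v : List α) (h1 : θ (u ++ v) = u ++ v) (h2 : θ (v ++ u) = v ++ u)
    (hne : u ++ v ≠ v ++ u) :
    ∃ (x : List α) (i : ℕ), 1 ≤ i ∧ Primitive (x ++ θ x) ∧
      u ++ v = listPow (x ++ θ x) i ∧ v ++ u = listPow (θ x ++ x) i := by
  rcases le_or_gt u.length v.length with hle | hlt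
  · exact main_aux θ hθ u v hle h1 h2 hne
  · obtain ⟨x, i, hi, hprim, hvu, huv⟩ :=
      main_aux θ hθ v u (le_of_lt hlt) h2 h1 (fun h => hne h.symm)
    refine ⟨θ x, i, hi, ?_, ?_, ?_⟩
    · rw [hθ.2]; exact prim_rot x (θ x) hprim
    · rw [hθ.2]; exact huv
    · rw [hθ.2]; exact hvu
end
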